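/- Enforcement Transparency: for every system p and every closed formula φ ∈ SHMLnf, if p satisfies φ then the instrumented system is strongly bisimilar to the original system, i.e., p ∈ ⟦φ⟧ implies ⟦φ⟧e[p] ∼ p. -/

import Mathlib

set_option autoImplicit false

/-- A labelled transition system over observable actions `Act`;
`none` plays the role of the silent action τ. -/
structure LTS (Act : Type) where
  S : Type
  Tr : S → Option Act → S → Prop

namespace Enf

open scoped Classical

variable {Act : Type}

/-- Zero or more silent steps. -/
def TauStar (L : LTS Act) : L.S → L.S → Prop :=
  Relation.ReflTransGen (fun p q => L.Tr p none q)

/-- The weak transition `p =a=> q`. -/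
def WStep (L : LTS Act) (p : L.S) (a : Act) (q : L.S) : Prop :=
  ∃ p₁ p₂, TauStar L p p₁ ∧ L.Tr p₁ (some a) p₂ ∧ TauStar L p₂ q

/-- Weak trace `p =t=> q`. -/
inductive WTrace (L : LTS Act) : L.S → List Act → L.S → Prop
  | nil {p q : L.S} : TauStar L p q → WTrace L p [] q
  | cons {p r q : L.S} {a : Act} {t : List Act} :
      WStep L p a r → WTrace L r t q → WTrace L p (a :: t) q

/-- SHML formulas: truth, falsehood, fixpoint variables, finite conjunctions,
modalities `[η]φ` (a guard set of actions together with an action-indexed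
continuation, representing the symbolic action and the matching substitutions),
and greatest fixpoints. -/
inductive Frm (Act : Type) : Type where
  | tt : Frm Act
  | ff : Frm Act
  | var : ℕ → Frm Act
  | conj : (n : ℕ) → (Fin n → Frm Act) → Frm Act
  | box : Set Act → (Act → Frm Act) → Frm Act
  | max : ℕ → Frm Act → Frm Act

namespace Frm

/-- Free fixpoint variables. -/
def fv : Frm Act → Set ℕ
  | .tt => ∅
  | .ff => ∅
  | .var X => {X}
  | .conj _ f => ⋃ i, fv (f i)
  | .box G k => ⋃ a ∈ G, fv (k a)
  | .max X φ => fv φ \ {X}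

def Closed (φ : Frm Act) : Prop := fv φ = ∅

/-- Substitution `φ[ψ/X]` (of a closed formula `ψ`). -/
def subst : Frm Act → ℕ → Frm Act → Frm Act
  | .tt, _, _ => .tt
  | .ff, _, _ => .ff
  | .var Y, X, ψ => if Y = X then ψ else .var Y
  | .conj n f, X, ψ => .conj n (fun i => subst (f i) X ψ)
  | .box G k, X, ψ => .box G (fun a => subst (k a) X ψ)
  | .max Y φ, X, ψ => if Y = X then .max Y φ else .max Y (subst φ X ψ)

/-- The normal-form fragment SHMLnf: conjunctions are conjunctions of
modalities with pairwise-disjoint guards, and each greatest fixpoint binds a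
variable occurring free in its body. -/
inductive IsNF : Frm Act → Prop
  | tt : IsNF .tt
  | ff : IsNF .ff
  | var (X : ℕ) : IsNF (.var X)
  | conj (n : ℕ) (G : Fin n → Set Act) (k : Fin n → Act → Frm Act)
      (hdisj : ∀ i j : Fin n, i ≠ j → ∀ a : Act, a ∈ G i → a ∉ G j)
      (hk : ∀ i : Fin n, ∀ a ∈ G i, IsNF (k i a)) :
      IsNF (.conj n fun i => .box (G i) (k i))
  | max (X : ℕ) (φ : Frm Act) (hfree : X ∈ fv φ) (hφ : IsNF φ) : IsNF (.max X φ)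

/-- `gvar X φ`: the variable `X` does not occur unguarded (i.e. outside every
modality) in `φ`. -/
def gvar (X : ℕ) : Frm Act → Prop
  | .tt => True
  | .ff => True
  | .var Y => Y ≠ X
  | .conj _ f => ∀ i, gvar X (f i)
  | .box _ _ => True
  | .max Y φ => Y = X ∨ gvar X φ

/-- A formula is guarded if every occurrence of a fixpoint variable lies
beneath a modality. -/
def Guarded : Frm Act → Prop
  | .tt => True
  | .ff => True
  | .var _ => True
  | .conj _ f => ∀ i, Guarded (f i)
  | .box G k => ∀ a ∈ G, Guarded (k a)
  | .max X φ => gvar X φ ∧ Guarded φ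

/-- Number of top-level greatest-fixpoint binders. -/
def topMax : Frm Act → ℕ
  | .max _ φ => topMax φ + 1
  | _ => 0

end Frm

/-- Denotational semantics of (possibly open) formulas, relative to an
environment mapping fixpoint variables to sets of states; `max` is interpreted
as the greatest fixpoint of the induced monotone map. -/
def sem (L : LTS Act) : Frm Act → (ℕ → Set L.S) → Set L.S
  | .tt, _ => Set.univ
  | .ff, _ => ∅
  | .var X, ρ => ρ X
  | .conj _ f, ρ => ⋂ i, sem L (f i) ρ
  | .box G k, ρ => {p | ∀ a ∈ G, ∀ q, WStep L p a q → q ∈ sem L (k a) ρ}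
  | .max X φ, ρ => ⋃₀ {S | S ⊆ sem L φ (Function.update ρ X S)}

/-- Semantics of closed formulas. -/
def Sem (L : LTS Act) (φ : Frm Act) : Set L.S := sem L φ fun _ => ∅

/-- Satisfiability. -/
def SatIn (L : LTS Act) (φ : Frm Act) : Prop := (Sem L φ).Nonempty

/-- The violation relation `p ⊨v^t φ`, defined as the least relation closed
under the given rules. -/
inductive Viol (L : LTS Act) : L.S → List Act → Frm Act → Prop
  | ff (p : L.S) : Viol L p [] .ff
  | conj {p : L.S} {t : List Act} {n : ℕ} {f : Fin n → Frm Act} (j : Fin n) :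
      Viol L p t (f j) → Viol L p t (.conj n f)
  | box {p p' : L.S} {t : List Act} {a : Act} {G : Set Act} {k : Act → Frm Act} :
      a ∈ G → WStep L p a p' → Viol L p' t (k a) → Viol L p (a :: t) (.box G k)
  | max {p : L.S} {t : List Act} {X : ℕ} {φ : Frm Act} :
      Viol L p t (Frm.subst φ X (.max X φ)) → Viol L p t (.max X φ)

/-- Transducers (enforcement monitors): identity, symbolic transformation
prefixes (a guard set of extended input actions, with `none` standing for the
insertion pattern •, an output per matched input, with `none` standing for τ,
and a continuation per matched input), finite selections, recursion, and
recursion variables. -/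
inductive Trn (Act : Type) : Type where
  | id : Trn Act
  | prf : Set (Option Act) → (Option Act → Option Act) → (Option Act → Trn Act) → Trn Act
  | sel : (n : ℕ) → (Fin n → Trn Act) → Trn Act
  | fix : ℕ → Trn Act → Trn Act
  | var : ℕ → Trn Act

namespace Trn

def tsubst : Trn Act → ℕ → Trn Act → Trn Act
  | .id, _, _ => .id
  | .prf G out k, x, s => .prf G out fun γ => tsubst (k γ) x s
  | .sel n f, x, s => .sel n fun i => tsubst (f i) x s
  | .fix y e, x, s => if y = x then .fix y e else .fix y (tsubst e x s)
  | .var y, x, s => if y = x then s else .var y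

end Trn

/-- Transducer transitions: labels are pairs (input, output) where input
`none` is the insertion pattern • and output `none` is τ. -/
inductive TStep : Trn Act → Option Act × Option Act → Trn Act → Prop
  | id (a : Act) : TStep .id (some a, some a) .id
  | prf {G : Set (Option Act)} {out : Option Act → Option Act}
      {k : Option Act → Trn Act} {γ : Option Act} (h : γ ∈ G) :
      TStep (.prf G out k) (γ, out γ) (k γ)
  | sel {n : ℕ} {f : Fin n → Trn Act} {l : Option Act × Option Act}
      {e' : Trn Act} (i : Fin n) (h : TStep (f i) l e') :
      TStep (.sel n f) l e'
  | fix {x : ℕ} {e : Trn Act} {l : Option Act × Option Act} {e' : Trn Act}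
      (h : TStep (Trn.tsubst e x (.fix x e)) l e') :
      TStep (.fix x e) l e'

/-- Instrumentation of a transducer on a system. -/
inductive IStep (L : LTS Act) : Trn Act × L.S → Option Act → Trn Act × L.S → Prop
  | trn {e e' : Trn Act} {p p' : L.S} {a : Act} {μ : Option Act} :
      L.Tr p (some a) p' → TStep e (some a, μ) e' → IStep L (e, p) μ (e', p')
  | asy {e : Trn Act} {p p' : L.S} :
      L.Tr p none p' → IStep L (e, p) none (e, p')
  | ins {e e' : Trn Act} {p : L.S} {μ : Option Act} :
      TStep e (none, μ) e' → IStep L (e, p) μ (e', p)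
  | ter {e : Trn Act} {p p' : L.S} {a : Act} :
      L.Tr p (some a) p' →
      (∀ μ e', ¬ TStep e (some a, μ) e') →
      (∀ μ e', ¬ TStep e (none, μ) e') →
      IStep L (e, p) (some a) (Trn.id, p')

/-- The LTS of monitored systems `e[p]`. -/
def instLTS (L : LTS Act) : LTS Act := ⟨Trn Act × L.S, IStep L⟩

/-- Strong bisimulations between (the state spaces of) two LTSs. -/
def IsBisim (L₁ L₂ : LTS Act) (R : L₁.S → L₂.S → Prop) : Prop :=
  ∀ s r, R s r →
    (∀ μ s', L₁.Tr s μ s' → ∃ r', L₂.Tr r μ r' ∧ R s' r') ∧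
    (∀ μ r', L₂.Tr r μ r' → ∃ s', L₁.Tr s μ s' ∧ R s' r')

/-- Strong bisimilarity. -/
def Bisim (L₁ L₂ : LTS Act) (s : L₁.S) (r : L₂.S) : Prop :=
  ∃ R, IsBisim L₁ L₂ R ∧ R s r

/-- The synthesis function `⟦-⟧e` from SHMLnf formulas to transducers:
formula variable `X` becomes monitor variable `X+1`; `tt` and `ff` become the
identity monitor; `max X.φ` becomes the corresponding recursive monitor; and a
normalised conjunction of modalities becomes a recursive selection (on the
fresh variable `0`) of symbolic prefixes that suppress (output τ, continue as
the recursion variable) actions whose continuation formula is `ff` and pass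
through all other matched actions, continuing with the synthesis of the
respective continuation formula. -/
noncomputable def synth : Frm Act → Trn Act
  | .tt => .id
  | .ff => .id
  | .var X => .var (X + 1)
  | .max X φ => .fix (X + 1) (synth φ)
  | .box G k =>
      .prf {γ | ∃ a ∈ G, γ = some a}
        (fun γ =>
          match γ with
          | some a => if k a = Frm.ff then none else some a
          | none => none)
        (fun γ =>
          match γ with
          | some a => if k a = Frm.ff then Trn.var 0 else synth (k a)
          | none => .id)
  | .conj n f => .fix 0 (.sel n fun i => synth (f i))

/-- Fuelled residual function (the fuel is consumed by fixpoint unfoldings;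
on guarded closed SHMLnf formulas `topMax φ + 1` units of fuel suffice). -/
noncomputable def afterFuel : ℕ → Frm Act → Act → Frm Act
  | 0, _, _ => .tt
  | n + 1, φ, a =>
    match φ with
    | .max X ψ => afterFuel n (Frm.subst ψ X (.max X ψ)) a
    | .conj m f =>
        if h : ∃ i : Fin m, ∃ G : Set Act, ∃ k : Act → Frm Act,
            f i = Frm.box G k ∧ a ∈ G
        then h.choose_spec.choose_spec.choose a
        else .tt
    | ψ => ψ

/-- The residual `after(φ, a)` of a guarded closed SHMLnf formula. -/
noncomputable def after (φ : Frm Act) (a : Act) : Frm Act :=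
  afterFuel (Frm.topMax φ + 1) φ a

/-- Satisfaction relations (the coinductive rules of `⊨s`). -/
def IsSatRel (L : LTS Act) (R : L.S → Frm Act → Prop) : Prop :=
  (∀ p, ¬ R p .ff) ∧
  (∀ p (n : ℕ) (f : Fin n → Frm Act), R p (.conj n f) → ∀ i, R p (f i)) ∧
  (∀ p (G : Set Act) (k : Act → Frm Act), R p (.box G k) →
      ∀ a ∈ G, ∀ q, WStep L p a q → R q (k a)) ∧
  (∀ p (X : ℕ) (φ : Frm Act), R p (.max X φ) → R p (Frm.subst φ X (.max X φ)))

/-- The largest satisfaction relation `⊨s`. -/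
def SatCo (L : LTS Act) (p : L.S) (φ : Frm Act) : Prop :=
  ∃ R, IsSatRel L R ∧ R p φ

/-!
The monitor synthesised from a normal-form formula only ever suppresses an action `a` at a
modality `[a]ff`, and it never inserts. A system satisfying the formula cannot perform such an
`a` (its `a`-derivatives would have to satisfy `ff`), so along every run of a satisfying system
the monitor acts as the identity. Since satisfaction is preserved by silent steps and, at the
modalities, passes to the continuation, "the monitor is synthesised from a closed normal-form
formula satisfied by the current state" is an invariant, and pairing `e[q]` with `q` under it
is a strong bisimulation.
-/

namespace Frm

lemma fv_subst_subset (φ ψ : Frm Act) (X : ℕ) : fv (subst φ X ψ) ⊆ (fv φ \ {X}) ∪ fv ψ := by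
  induction φ with
  | tt | ff => simp [subst, fv]
  | var Y =>
    by_cases hY : Y = X
    · simp [subst, hY]
    · simp [subst, fv, hY]
  | conj n f ih =>
    simp only [subst, fv, Set.iUnion_subset_iff]
    intro i
    refine (ih i).trans (Set.union_subset_union_left _ (Set.sdiff_subset_sdiff_left ?_))
    exact Set.subset_iUnion (fun i => fv (f i)) i
  | box G k ih =>
    simp only [subst, fv, Set.iUnion_subset_iff]
    intro a ha
    refine (ih a).trans (Set.union_subset_union_left _ (Set.sdiff_subset_sdiff_left ?_))
    exact Set.subset_biUnion_of_mem (u := fun a => fv (k a)) ha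
  | max Y φ ih =>
    by_cases hY : Y = X
    · subst hY
      simp only [subst, fv]
      exact fun Z hZ => Or.inl ⟨hZ, hZ.2⟩
    · simp only [subst, if_neg hY, fv]
      intro Z ⟨hZφ, hZY⟩
      rcases ih hZφ with ⟨hZ, hZX⟩ | hZ
      · exact Or.inl ⟨⟨hZ, hZY⟩, hZX⟩
      · exact Or.inr hZ

lemma fv_diff_subset_fv_subst (φ ψ : Frm Act) (X : ℕ) : fv φ \ {X} ⊆ fv (subst φ X ψ) := by
  induction φ with
  | tt | ff => simp [fv]
  | var Y =>
    rintro Z ⟨rfl, hZX⟩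
    simp_all [subst, fv]
  | conj n f ih =>
    rintro Z ⟨hZ, hZX⟩
    obtain ⟨i, hi⟩ := Set.mem_iUnion.1 hZ
    exact Set.mem_iUnion.2 ⟨i, ih i ⟨hi, hZX⟩⟩
  | box G k ih =>
    rintro Z ⟨hZ, hZX⟩
    obtain ⟨a, ha, hi⟩ := Set.mem_iUnion₂.1 hZ
    exact Set.mem_iUnion₂.2 ⟨a, ha, ih a ⟨hi, hZX⟩⟩
  | max Y φ ih =>
    rintro Z ⟨⟨hZ, hZY⟩, hZX⟩
    by_cases hY : Y = X
    · simp only [subst, if_pos hY]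
      exact ⟨hZ, hZY⟩
    · simp only [subst, if_neg hY]
      exact ⟨ih ⟨hZ, hZX⟩, hZY⟩

lemma Closed.subst_max {X : ℕ} {φ : Frm Act} (hc : (max X φ).Closed) :
    (subst φ X (max X φ)).Closed := by
  have hφ : fv φ ⊆ {X} := Set.sdiff_eq_empty.1 hc
  refine Set.subset_empty_iff.1 ((fv_subst_subset φ _ X).trans ?_)
  rw [Set.sdiff_eq_empty.2 hφ, hc, Set.union_empty]

lemma Closed.of_conj_box {n : ℕ} {G : Fin n → Set Act} {k : Fin n → Act → Frm Act}
    (hc : (conj n fun i => box (G i) (k i)).Closed) {i : Fin n} {a : Act} (ha : a ∈ G i) :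
    (k i a).Closed :=
  Set.subset_empty_iff.1 fun _ hX =>
    hc ▸ Set.mem_iUnion.2 ⟨i, Set.mem_iUnion₂.2 ⟨a, ha, hX⟩⟩

lemma subst_eq_ff_iff {φ ψ : Frm Act} {X : ℕ} (hψ : ψ ≠ ff) : subst φ X ψ = ff ↔ φ = ff := by
  cases φ <;> simp only [subst] <;> (try split_ifs) <;> simp [hψ]

lemma IsNF.subst {φ ψ : Frm Act} {X : ℕ} (hφ : φ.IsNF) (hψ : ψ.IsNF) :
    (Frm.subst φ X ψ).IsNF := by
  induction hφ with
  | tt => exact .tt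
  | ff => exact .ff
  | var Y =>
    simp only [Frm.subst]
    split_ifs
    exacts [hψ, .var Y]
  | conj n G k hdisj _ ih => exact .conj n G _ hdisj ih
  | max Y φ hfree hφ ih =>
    simp only [Frm.subst]
    split_ifs with hY
    · exact .max Y φ hfree hφ
    · exact .max Y _ (fv_diff_subset_fv_subst φ ψ X ⟨hfree, hY⟩) ih

end Frm

section Semantics

variable {L : LTS Act}

lemma sem_mono (φ : Frm Act) {ρ₁ ρ₂ : ℕ → Set L.S} (h : ∀ X ∈ φ.fv, ρ₁ X ⊆ ρ₂ X) :
    sem L φ ρ₁ ⊆ sem L φ ρ₂ := by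
  induction φ generalizing ρ₁ ρ₂ with
  | tt | ff => simp [sem]
  | var X => exact h X rfl
  | conj n f ih =>
    exact Set.iInter_mono fun i => ih i fun X hX => h X (Set.mem_iUnion.2 ⟨i, hX⟩)
  | box G k ih =>
    exact fun p hp a ha q hq =>
      ih a (fun X hX => h X (Set.mem_iUnion₂.2 ⟨a, ha, hX⟩)) (hp a ha q hq)
  | max X φ ih =>
    rintro p ⟨S, hS, hpS⟩
    refine ⟨S, fun r hr => ih (fun Y hY => ?_) (hS hr), hpS⟩
    by_cases hYX : Y = X
    · simp [hYX]
    · simpa [Function.update_of_ne hYX] using h Y ⟨hY, hYX⟩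

lemma sem_congr (φ : Frm Act) {ρ₁ ρ₂ : ℕ → Set L.S} (h : ∀ X ∈ φ.fv, ρ₁ X = ρ₂ X) :
    sem L φ ρ₁ = sem L φ ρ₂ :=
  (sem_mono φ fun X hX => (h X hX).le).antisymm (sem_mono φ fun X hX => (h X hX).ge)

lemma sem_eq_of_closed {φ : Frm Act} (hc : φ.Closed) (ρ₁ ρ₂ : ℕ → Set L.S) :
    sem L φ ρ₁ = sem L φ ρ₂ :=
  sem_congr φ fun X hX => absurd (hc ▸ hX) (Set.notMem_empty X)

lemma sem_subst (φ : Frm Act) {ψ : Frm Act} (X : ℕ) (hψ : ψ.Closed) (ρ : ℕ → Set L.S) :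
    sem L (φ.subst X ψ) ρ = sem L φ (Function.update ρ X (sem L ψ ρ)) := by
  induction φ generalizing ρ with
  | tt | ff => rfl
  | var Y => by_cases hY : Y = X <;> simp [Frm.subst, sem, hY]
  | conj n f ih => exact Set.iInter_congr fun i => ih i ρ
  | box G k ih =>
    ext p
    simp only [Frm.subst, sem, ih]
  | max Y φ ih =>
    by_cases hY : Y = X
    · subst hY
      simp only [Frm.subst]
      exact sem_congr _ fun Z hZ => (Function.update_of_ne hZ.2 _ _).symm
    · have hbody : ∀ S : Set L.S, sem L (φ.subst X ψ) (Function.update ρ Y S) =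
          sem L φ (Function.update (Function.update ρ X (sem L ψ ρ)) Y S) := fun S => by
        rw [ih, sem_eq_of_closed hψ _ ρ, Function.update_comm (Ne.symm hY)]
      simp only [Frm.subst, if_neg hY, sem, hbody]

lemma Sem_subset_Sem_unfold {X : ℕ} {φ : Frm Act} (hc : (Frm.max X φ).Closed) :
    Sem L (.max X φ) ⊆ Sem L (φ.subst X (.max X φ)) := by
  rintro p ⟨S, hS, hpS⟩
  rw [Sem, sem_subst φ X hc]
  refine sem_mono φ (fun Y _ => ?_) (hS hpS)
  by_cases hY : Y = X
  · subst hY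
    simp only [Function.update_self]
    exact fun r hr => ⟨S, hS, hr⟩
  · simp [Function.update_of_ne hY]

lemma WStep.of_tr {p q : L.S} {a : Act} (h : L.Tr p (some a) q) : WStep L p a q :=
  ⟨p, q, .refl, h, .refl⟩

lemma WStep.tau_head {p p' q : L.S} {a : Act} (h : L.Tr p none p') (hw : WStep L p' a q) :
    WStep L p a q :=
  let ⟨p₁, p₂, h₁, h₂, h₃⟩ := hw
  ⟨p₁, p₂, .head h h₁, h₂, h₃⟩

lemma sem_tau {φ : Frm Act} {ρ : ℕ → Set L.S}
    (hρ : ∀ X p p', L.Tr p none p' → p ∈ ρ X → p' ∈ ρ X) {p p' : L.S}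
    (h : L.Tr p none p') (hp : p ∈ sem L φ ρ) : p' ∈ sem L φ ρ := by
  induction φ generalizing ρ p p' with
  | tt => trivial
  | ff => exact hp
  | var X => exact hρ X p p' h hp
  | conj n f ih => exact Set.mem_iInter.2 fun i => ih i hρ h (Set.mem_iInter.1 hp i)
  | box G k ih => exact fun a ha q hq => hp a ha q (WStep.tau_head h hq)
  | max X φ ih =>
    obtain ⟨S, hS, hpS⟩ := hp
    -- the post-fixpoint `S` need not be τ-closed, but its τ-closure is again a post-fixpoint
    let T : Set L.S := {r' | ∃ r ∈ S, TauStar L r r'}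
    have hρT : ∀ Y r r', L.Tr r none r' → r ∈ Function.update ρ X T Y →
        r' ∈ Function.update ρ X T Y := by
      intro Y r r' hr hrY
      by_cases hY : Y = X
      · subst hY
        obtain ⟨r₀, hr₀, hr₀r⟩ := by simpa using hrY
        simpa using ⟨r₀, hr₀, hr₀r.tail hr⟩
      · rw [Function.update_of_ne hY] at hrY ⊢
        exact hρ Y r r' hr hrY
    refine ⟨T, ?_, p, hpS, .single h⟩
    rintro r' ⟨r, hr, hrr'⟩
    have hrT : r ∈ sem L φ (Function.update ρ X T) := by
      refine sem_mono φ (fun Y _ => ?_) (hS hr)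
      by_cases hY : Y = X
      · subst hY
        simp only [Function.update_self]
        exact fun r hr => ⟨r, hr, .refl⟩
      · simp [Function.update_of_ne hY]
    induction hrr' with
    | refl => exact hrT
    | tail _ hstep ih' => exact ih hρT hstep ih'

lemma Sem_tau {φ : Frm Act} {p p' : L.S} (h : L.Tr p none p') (hp : p ∈ Sem L φ) :
    p' ∈ Sem L φ :=
  sem_tau (fun _ _ _ _ h => absurd h (Set.notMem_empty _)) h hp

end Semantics

lemma tsubst_synth_zero {φ : Frm Act} (hφ : φ.IsNF) (s : Trn Act) :
    (synth φ).tsubst 0 s = synth φ := by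
  induction hφ with
  | tt | ff | var | conj => simp [synth, Trn.tsubst]
  | max Y φ _ _ ih => simp [synth, Trn.tsubst, ih]

lemma tsubst_synth_succ (φ : Frm Act) {ψ : Frm Act} (X : ℕ) (hψ : ψ ≠ .ff) :
    (synth φ).tsubst (X + 1) (synth ψ) = synth (φ.subst X ψ) := by
  induction φ with
  | tt | ff => rfl
  | var Y => by_cases hY : Y = X <;> simp [synth, Trn.tsubst, Frm.subst, hY]
  | conj n f ih => simp [synth, Trn.tsubst, Frm.subst, ih]
  | box G k ih =>
    simp only [synth, Frm.subst, Trn.tsubst, Frm.subst_eq_ff_iff hψ]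
    congr 2 with (_ | a)
    · rfl
    · by_cases h : k a = .ff <;> simp [h, Trn.tsubst, ih]
  | max Y φ ih => by_cases hY : Y = X <;> simp [synth, Trn.tsubst, Frm.subst, hY, ih]

lemma TStep.tsubst_synth_box {G : Set Act} {k : Act → Frm Act} {s e' : Trn Act}
    {l : Option Act × Option Act} (hk : ∀ a ∈ G, (k a).IsNF)
    (h : TStep ((synth (.box G k)).tsubst 0 s) l e') :
    ∃ a ∈ G, l.1 = some a ∧ (k a ≠ .ff → l.2 = some a ∧ e' = synth (k a)) := by
  simp only [synth, Trn.tsubst] at h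
  cases h with
  | prf hγ =>
    obtain ⟨a, ha, rfl⟩ := hγ
    exact ⟨a, ha, rfl, fun hne => by simp [hne, tsubst_synth_zero (hk a ha)]⟩

section Transparency

variable {L : LTS Act}

def IsSynthOfSat (L : LTS Act) (q : L.S) (e : Trn Act) : Prop :=
  ∃ ψ : Frm Act, ψ.Closed ∧ ψ.IsNF ∧ q ∈ Sem L ψ ∧ synth ψ = e

lemma IsSynthOfSat.id (q : L.S) : IsSynthOfSat L q .id :=
  ⟨.tt, rfl, .tt, trivial, rfl⟩

lemma IsSynthOfSat.tau {q q' : L.S} {e : Trn Act} (hs : IsSynthOfSat L q e)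
    (h : L.Tr q none q') : IsSynthOfSat L q' e :=
  let ⟨ψ, hc, hnf, hq, he⟩ := hs
  ⟨ψ, hc, hnf, Sem_tau h hq, he⟩

lemma IsSynthOfSat.tstep {q : L.S} {e e' : Trn Act} {l : Option Act × Option Act}
    (hs : IsSynthOfSat L q e) (h : TStep e l e') :
    ∃ a, l.1 = some a ∧ ∀ q', L.Tr q (some a) q' → l.2 = some a ∧ IsSynthOfSat L q' e' := by
  obtain ⟨ψ, hc, hnf, hq, he⟩ := hs
  induction h generalizing ψ with
  | id a => exact ⟨a, rfl, fun q' _ => ⟨rfl, .id q'⟩⟩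
  | prf | sel => cases hnf <;> simp [synth] at he
  | fix hsub ih =>
    cases hnf with
    | tt | ff | var => simp [synth] at he
    | max X φ hfree hφ =>
      rw [synth, Trn.fix.injEq] at he
      obtain ⟨rfl, rfl⟩ := he
      exact ih _ hc.subst_max (hφ.subst (.max X φ hfree hφ)) (Sem_subset_Sem_unfold hc hq)
        (tsubst_synth_succ φ X (by simp)).symm
    | conj n G k _ hk =>
      rw [synth, Trn.fix.injEq] at he
      obtain ⟨rfl, rfl⟩ := he
      rw [Trn.tsubst] at hsub
      cases hsub with
      | sel i hi =>
        obtain ⟨a, ha, hl, hout⟩ := TStep.tsubst_synth_box (hk i) hi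
        refine ⟨a, hl, fun q' hq' => ?_⟩
        have hq'k : q' ∈ Sem L (k i a) := Set.mem_iInter.1 hq i a ha q' (.of_tr hq')
        obtain ⟨hl', he'⟩ := hout fun hff => by rw [hff] at hq'k; exact hq'k
        exact ⟨hl', k i a, hc.of_conj_box ha, hk i a ha, hq'k, he'.symm⟩

lemma IsSynthOfSat.not_tstep_none {q : L.S} {e e' : Trn Act} {μ : Option Act}
    (hs : IsSynthOfSat L q e) : ¬ TStep e (none, μ) e' := fun h => by
  obtain ⟨a, ha, -⟩ := hs.tstep h
  cases ha

lemma isBisim_isSynthOfSat :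
    IsBisim (instLTS L) L fun s r => s.2 = r ∧ IsSynthOfSat L r s.1 := by
  rintro ⟨e, q⟩ r ⟨rfl, hs⟩
  refine ⟨fun μ s' h => ?_, fun μ q' h => ?_⟩
  · change IStep L _ _ _ at h
    cases h with
    | trn htr ht =>
      obtain ⟨a, ⟨⟩, hout⟩ := hs.tstep ht
      obtain ⟨rfl, hs'⟩ := hout _ htr
      exact ⟨_, htr, rfl, hs'⟩
    | asy htr => exact ⟨_, htr, rfl, hs.tau htr⟩
    | ins ht => exact (hs.not_tstep_none ht).elim
    | ter htr => exact ⟨_, htr, rfl, .id _⟩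
  · cases μ with
    | none => exact ⟨(e, q'), .asy h, rfl, hs.tau h⟩
    | some a =>
      by_cases hmatch : ∃ μ e', TStep e (some a, μ) e'
      · obtain ⟨μ, e', ht⟩ := hmatch
        obtain ⟨b, ⟨⟩, hout⟩ := hs.tstep ht
        obtain ⟨rfl, hs'⟩ := hout q' h
        exact ⟨(e', q'), .trn h ht, rfl, hs'⟩
      · exact ⟨(.id, q'), .ter h (fun μ e' ht => hmatch ⟨μ, e', ht⟩)
          (fun _ _ => hs.not_tstep_none), rfl, .id q'⟩

end Transparency

/-- Enforcement Transparency: for every system p and closed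
φ ∈ SHMLnf, if p ∈ ⟦φ⟧ then ⟦φ⟧e[p] ∼ p. -/
theorem enforcement_transparency (Act : Type) (L : LTS Act) (φ : Frm Act)
    (hclosed : φ.Closed) (hnf : φ.IsNF) (p : L.S) (hsat : p ∈ Sem L φ) :
    Bisim (instLTS L) L (synth φ, p) p :=
  ⟨_, isBisim_isSynthOfSat, rfl, φ, hclosed, hnf, hsat, rfl⟩

end Enf
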